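/- The total number of walks of length n with steps W=(-1,0), N=(0,1), SE=(1,-1) that start at (0,0) and stay in the quarter plane (with arbitrary endpoint) equals the n-th Motzkin number, i.e. the sum over k from 0 to floor(n/2) of C(n,2k)·C(2k,k)/(k+1). -/

import Mathlib

/-- Number of quarter-plane walks of length `n` with steps in `S`, starting at `(0,0)`,
staying in the quarter plane, with arbitrary endpoint. -/
noncomputable def qwalkTotal (S : Set (ℤ × ℤ)) (n : ℕ) : ℕ :=
  Nat.card {w : Fin (n + 1) → ℤ × ℤ //
    w 0 = (0, 0) ∧
    (∀ i : Fin n, w i.succ - w i.castSucc ∈ S) ∧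
    (∀ i, 0 ≤ (w i).1 ∧ 0 ≤ (w i).2)}

/-- The `n`-th Motzkin number. -/
def motzkin (n : ℕ) : ℕ :=
  ∑ k ∈ Finset.range (n / 2 + 1), n.choose (2 * k) * ((2 * k).choose k / (k + 1))

open Finset

/-!
Let `W n p` be the number of walks of length `n` from `p`. It vanishes outside the quadrant, and
inside it `W (n + 1) p = ∑ s, W n (p + s)`. With `M n j` the number of Motzkin paths of length `n`
ending at height `j`, the function `(x, y) ↦ ∑_{s ≤ x, t ≤ y} M n (s + t)` obeys the same
recurrence, because `M (n + 1) j = M n (j - 1) + M n j + M n (j + 1)` and the height `s + t`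
moves by `-1`, `+1`, `0` under the steps W, N, SE. Hence `W n (0, 0) = M n 0`. Finally
`M n j = ∑ₖ C(n, 2k + j) B(k, j)`: choose the positions of the non-flat steps and put a ballot path
on them; ballot paths returning to height `0` are counted by the Catalan numbers.
-/

/-- `ballot k j` counts the paths with `k` down-steps and `k + j` up-steps that never go below
their starting height. -/
def ballot : ℕ → ℕ → ℕ
  | 0, _ => 1
  | k + 1, 0 => ballot k 1
  | k + 1, j + 1 => ballot (k + 1) j + ballot k (j + 2)
  termination_by k j => (k, j)

theorem ballot_add_choose : ∀ k j : ℕ,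
    ballot k j + (2 * k + j).choose (k + j + 1) = (2 * k + j).choose (k + j)
  | 0, j => by simp [ballot]
  | k + 1, 0 => by
    have ih := ballot_add_choose k 1
    have p₁ := Nat.choose_succ_succ' (2 * k + 1) (k + 1)
    have p₂ := Nat.choose_succ_succ' (2 * k + 1) k
    have hsymm := Nat.choose_symm_half k
    rw [ballot]
    ring_nf at *
    omega
  | k + 1, j + 1 => by
    have ih₁ := ballot_add_choose (k + 1) j
    have ih₂ := ballot_add_choose k (j + 2)
    have p₁ := Nat.choose_succ_succ' (2 * k + j + 2) (k + j + 2)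
    have p₂ := Nat.choose_succ_succ' (2 * k + j + 2) (k + j + 1)
    rw [ballot]
    ring_nf at *
    omega
  termination_by k j => (k, j)

theorem ballot_zero_right_eq_catalan (k : ℕ) : ballot k 0 = catalan k := by
  have h := ballot_add_choose k 0
  have hr := Nat.choose_succ_right_eq (2 * k) k
  have hc := succ_mul_catalan_eq_centralBinom k
  rw [Nat.centralBinom_eq_two_mul_choose] at hc
  simp only [add_zero] at h
  rw [show 2 * k - k = k by omega] at hr
  apply Nat.eq_of_mul_eq_mul_left k.succ_pos
  nlinarith

/-- The number of Motzkin paths of length `n` from height `0` to height `j`. -/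
def motzkinTriangle (n j : ℕ) : ℕ := ∑ k ∈ range (n + 1), n.choose (2 * k + j) * ballot k j

theorem sum_range_choose_mul_of_le (f : ℕ → ℕ) {n j N M : ℕ} (hNM : N ≤ M)
    (hN : n < 2 * N + j) :
    ∑ k ∈ range N, n.choose (2 * k + j) * f k = ∑ k ∈ range M, n.choose (2 * k + j) * f k := by
  refine sum_subset (range_subset_range.mpr hNM) fun k _ hk => ?_
  rw [Nat.choose_eq_zero_of_lt (by simp at hk; omega), zero_mul]

theorem motzkinTriangle_zero_left (j : ℕ) : motzkinTriangle 0 j = if j = 0 then 1 else 0 := by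
  cases j <;> simp [motzkinTriangle, ballot]

theorem motzkinTriangle_succ_zero (n : ℕ) :
    motzkinTriangle (n + 1) 0 = motzkinTriangle n 0 + motzkinTriangle n 1 := by
  have hshift (k : ℕ) : 2 * (k + 1) = 2 * k + 1 + 1 := by ring
  have hprev : motzkinTriangle n 0 =
      ∑ k ∈ range (n + 1), n.choose (2 * k + 1 + 1) * ballot k 1 + 1 := by
    rw [motzkinTriangle, sum_range_choose_mul_of_le _ (Nat.le_succ _) (by omega), sum_range_succ']
    simp only [hshift, ballot, mul_zero, add_zero, Nat.choose_zero_right, mul_one]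
  rw [motzkinTriangle, sum_range_succ', hprev, motzkinTriangle]
  simp only [hshift, ballot, add_zero, Nat.choose_succ_succ', add_mul, sum_add_distrib,
    mul_zero, Nat.choose_zero_right, mul_one]
  omega

theorem motzkinTriangle_succ_succ (n j : ℕ) :
    motzkinTriangle (n + 1) (j + 1) =
      motzkinTriangle n j + motzkinTriangle n (j + 1) + motzkinTriangle n (j + 2) := by
  have hlow : ∑ k ∈ range (n + 2), n.choose (2 * k + j) * ballot k (j + 1) =
      motzkinTriangle n j + motzkinTriangle n (j + 2) := by
    have hshift (k : ℕ) : 2 * (k + 1) + j = 2 * k + (j + 2) := by ring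
    rw [motzkinTriangle, sum_range_choose_mul_of_le _ (Nat.le_succ (n + 1)) (by omega),
      sum_range_succ', sum_range_succ' _ (n + 1), motzkinTriangle]
    simp only [hshift]
    simp only [ballot, mul_add, sum_add_distrib]
    omega
  have hhigh : ∑ k ∈ range (n + 2), n.choose (2 * k + j + 1) * ballot k (j + 1) =
      motzkinTriangle n (j + 1) :=
    (sum_range_choose_mul_of_le (j := j + 1) _ (Nat.le_succ (n + 1)) (by omega)).symm
  rw [motzkinTriangle]
  simp only [← add_assoc, Nat.choose_succ_succ', add_mul, sum_add_distrib, hlow, hhigh]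
  ring

theorem motzkinTriangle_zero_right (n : ℕ) : motzkinTriangle n 0 = motzkin n := by
  rw [motzkin, motzkinTriangle,
    ← sum_range_choose_mul_of_le _ (by omega : n / 2 + 1 ≤ n + 1) (by omega)]
  refine sum_congr rfl fun k _ => ?_
  rw [ballot_zero_right_eq_catalan, catalan_eq_centralBinom_div,
    Nat.centralBinom_eq_two_mul_choose, add_zero]

def motzkinRow (n a b : ℕ) : ℕ := ∑ t ∈ range b, motzkinTriangle n (a + t)

def motzkinRect (n a b : ℕ) : ℕ := ∑ s ∈ range a, motzkinRow n s b

theorem motzkinRow_succ_right (n a b : ℕ) :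
    motzkinRow n a (b + 1) = motzkinTriangle n a + motzkinRow n (a + 1) b := by
  simp only [motzkinRow, sum_range_succ', add_zero, add_comm, add_left_comm]

theorem motzkinRow_succ_succ (n a b : ℕ) :
    motzkinRow (n + 1) (a + 1) b =
      motzkinRow n a b + motzkinRow n (a + 1) b + motzkinRow n (a + 2) b := by
  simp only [motzkinRow, ← sum_add_distrib]
  refine sum_congr rfl fun t _ => ?_
  rw [show a + 1 + t = a + t + 1 by ring, motzkinTriangle_succ_succ]
  ring_nf

theorem motzkinRow_succ_zero (n b : ℕ) :
    motzkinRow (n + 1) 0 (b + 1) =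
      motzkinRow n 0 b + motzkinRow n 0 (b + 1) + motzkinRow n 1 (b + 1) := by
  rw [motzkinRow_succ_right, motzkinRow_succ_right, motzkinRow_succ_right, zero_add,
    motzkinRow_succ_succ, motzkinTriangle_succ_zero]
  ring

theorem motzkinRect_zero_left (a b : ℕ) : motzkinRect 0 (a + 1) (b + 1) = 1 := by
  simp [motzkinRect, motzkinRow, motzkinTriangle_zero_left, sum_range_succ']

theorem motzkinRect_succ (n a b : ℕ) :
    motzkinRect (n + 1) (a + 1) (b + 1) =
      motzkinRect n a (b + 1) + motzkinRect n (a + 1) (b + 2) + motzkinRect n (a + 2) b := by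
  induction a with
  | zero =>
    simp only [motzkinRect, sum_range_succ, sum_range_zero, zero_add, motzkinRow_succ_zero]
    rw [motzkinRow_succ_right n 0 (b + 1), motzkinRow_succ_right n 0 b]
    ring
  | succ a ih =>
    rw [motzkinRect, sum_range_succ, ← motzkinRect, ih, motzkinRow_succ_succ]
    simp only [motzkinRect, sum_range_succ]
    rw [motzkinRow_succ_right n (a + 1) (b + 1), motzkinRow_succ_right n (a + 1) b]
    ring

def QWalk (S : Set (ℤ × ℤ)) (p : ℤ × ℤ) (n : ℕ) : Type :=
  {w : Fin (n + 1) → ℤ × ℤ //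
    w 0 = p ∧
    (∀ i : Fin n, w i.succ - w i.castSucc ∈ S) ∧
    (∀ i, 0 ≤ (w i).1 ∧ 0 ≤ (w i).2)}

namespace QWalk

variable {S : Set (ℤ × ℤ)} {p : ℤ × ℤ} {n : ℕ}

def firstStep (w : QWalk S p (n + 1)) : S := ⟨w.1 1 - w.1 0, by simpa using w.2.2.1 0⟩

def firstStepFiberEquiv (hp : 0 ≤ p.1 ∧ 0 ≤ p.2) (s : S) :
    {w : QWalk S p (n + 1) // w.firstStep = s} ≃ QWalk S (p + s) n where
  toFun w := ⟨Fin.tail w.1.1, by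
      have h : w.1.1 1 - w.1.1 0 = s := congrArg Subtype.val w.2
      rw [w.1.2.1] at h
      simp [Fin.tail, ← h],
    fun i => by simpa [Fin.tail] using w.1.2.2.1 i.succ, fun i => w.1.2.2.2 i.succ⟩
  invFun v := ⟨⟨Fin.cons p v.1, Fin.cons_zero _ _, fun i => by
      cases i using Fin.cases with
      | zero => simp [v.2.1]
      | succ j => simpa [← Fin.succ_castSucc] using v.2.2.1 j,
    fun i => by
      cases i using Fin.cases with
      | zero => simpa using hp
      | succ j => simpa using v.2.2.2 j⟩,
    Subtype.ext (by simp [firstStep, v.2.1])⟩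
  left_inv w := by
    apply Subtype.ext; apply Subtype.ext
    simp [← w.1.2.1]
  right_inv v := by
    apply Subtype.ext
    simp

def succEquivSigma (hp : 0 ≤ p.1 ∧ 0 ≤ p.2) : QWalk S p (n + 1) ≃ Σ s : S, QWalk S (p + s) n :=
  (Equiv.sigmaFiberEquiv firstStep).symm.trans (Equiv.sigmaCongrRight (firstStepFiberEquiv hp))

theorem isEmpty_of_not_nonneg (hp : ¬(0 ≤ p.1 ∧ 0 ≤ p.2)) : IsEmpty (QWalk S p n) :=
  ⟨fun w => hp (w.2.1 ▸ w.2.2.2 0)⟩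

theorem card_eq_zero_of_not_nonneg (hp : ¬(0 ≤ p.1 ∧ 0 ≤ p.2)) : Nat.card (QWalk S p n) = 0 :=
  have := isEmpty_of_not_nonneg (S := S) (n := n) hp
  Nat.card_of_isEmpty

instance [Finite S] : Finite (QWalk S p n) := by
  induction n generalizing p with
  | zero =>
    have : Subsingleton (QWalk S p 0) :=
      ⟨fun w w' => Subtype.ext <| funext fun i => by rw [Fin.eq_zero i, w.2.1, w'.2.1]⟩
    infer_instance
  | succ n ih =>
    by_cases hp : 0 ≤ p.1 ∧ 0 ≤ p.2
    · exact Finite.of_equiv _ (succEquivSigma hp).symm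
    · have := isEmpty_of_not_nonneg (S := S) (n := n + 1) hp
      infer_instance

theorem card_zero (hp : 0 ≤ p.1 ∧ 0 ≤ p.2) : Nat.card (QWalk S p 0) = 1 := by
  refine Nat.card_eq_one_iff_exists.mpr ⟨⟨fun _ => p, rfl, Fin.elim0, fun _ => hp⟩, fun w => ?_⟩
  apply Subtype.ext; funext i; rw [Fin.eq_zero i, w.2.1]

theorem card_succ (S : Finset (ℤ × ℤ)) (hp : 0 ≤ p.1 ∧ 0 ≤ p.2) :
    Nat.card (QWalk S p (n + 1)) = ∑ s ∈ S, Nat.card (QWalk S (p + s) n) := by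
  rw [Nat.card_congr (succEquivSigma hp), Nat.card_sigma]
  exact sum_coe_sort S fun s => Nat.card (QWalk S (p + s) n)

end QWalk

theorem motzkinRect_toNat_eq_zero {p : ℤ × ℤ} (hp : ¬(0 ≤ p.1 ∧ 0 ≤ p.2)) (n : ℕ) :
    motzkinRect n (p.1 + 1).toNat (p.2 + 1).toNat = 0 := by
  rcases (by omega : (p.1 + 1).toNat = 0 ∨ (p.2 + 1).toNat = 0) with h | h <;>
    simp [h, motzkinRect, motzkinRow]

/-- Shifting the corner by one makes `toNat` send the points outside the quadrant to an empty
rectangle. -/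
theorem card_qwalk_WNSE (n : ℕ) (p : ℤ × ℤ) :
    Nat.card (QWalk {(-1, 0), (0, 1), (1, -1)} p n) =
      motzkinRect n (p.1 + 1).toNat (p.2 + 1).toNat := by
  by_cases hp : 0 ≤ p.1 ∧ 0 ≤ p.2
  swap
  · rw [QWalk.card_eq_zero_of_not_nonneg hp, motzkinRect_toNat_eq_zero hp]
  obtain ⟨a, b⟩ := p
  lift a to ℕ using hp.1
  lift b to ℕ using hp.2
  cases n with
  | zero => simp [QWalk.card_zero hp, motzkinRect_zero_left]
  | succ n =>
    have hS : ({(-1, 0), (0, 1), (1, -1)} : Set (ℤ × ℤ)) =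
        ↑({(-1, 0), (0, 1), (1, -1)} : Finset (ℤ × ℤ)) := by simp
    rw [hS, QWalk.card_succ _ hp, sum_insert (by decide), sum_insert (by decide), sum_singleton,
      ← hS, card_qwalk_WNSE n, card_qwalk_WNSE n, card_qwalk_WNSE n]
    simp [show ((a : ℤ) + 1 + 1).toNat = a + 2 by omega,
      show ((b : ℤ) + 1 + 1).toNat = b + 2 by omega, motzkinRect_succ]
    ring

theorem walks_WNSE_total (n : ℕ) :
    qwalkTotal {(-1, 0), (0, 1), (1, -1)} n = motzkin n :=
  calc qwalkTotal {(-1, 0), (0, 1), (1, -1)} n = motzkinRect n 1 1 := card_qwalk_WNSE n (0, 0)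
    _ = motzkinTriangle n 0 := by simp [motzkinRect, motzkinRow]
    _ = motzkin n := motzkinTriangle_zero_right n
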